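/- arXiv:2512.17096 — 9 statements merged into one kernel-verified Lean document; each statement's English description precedes it below -/
import Mathlib

section
/- Let n ≥ 1 and let v : Fin (n+1) → EuclideanSpace ℝ (Fin n) be an affinely independent family of points all lying on the unit sphere (‖v k‖ = 1 for every k). Suppose the origin 0 is a strictly positive convex combination of the vertices, i.e. 0 = ∑_k λ_k • v_k for some weights λ_k > 0 with ∑_k λ_k = 1. Then there exists an index k such that the distance from 0 to the k-th facet hyperplane is at most 1/n, i.e. Metric.infDist 0 (affineSpan ℝ {v j : j ≠ k}) ≤ 1/n. -/
/-!
Take `k` with the smallest weight, so `λₖ ≤ 1/(n+1)`. Renormalising the remaining weights, the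
relation `∑ λⱼ vⱼ = 0` exhibits `-(λₖ/(1-λₖ)) vₖ` as a convex combination of the vertices of the
`k`-th facet. That point lies on the facet hyperplane at norm `λₖ/(1-λₖ) ≤ 1/n` from the origin.
-/

open Finset

theorem neg_smul_mem_convexHull_facet {𝕜 E ι : Type*} [Field 𝕜] [LinearOrder 𝕜]
    [IsStrictOrderedRing 𝕜] [AddCommGroup E] [Module 𝕜 E] [Fintype ι] [DecidableEq ι]
    {v : ι → E} {w : ι → 𝕜} (hw₀ : ∀ j, 0 ≤ w j) (hw₁ : ∑ j, w j = 1)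
    (hv : ∑ j, w j • v j = 0) {k : ι} (hk : w k < 1) :
    -((w k / (1 - w k)) • v k) ∈ convexHull 𝕜 (v '' {j | j ≠ k}) := by
  have hsum : ∑ j ∈ univ.erase k, w j = 1 - w k := by
    rw [sum_erase_eq_sub (mem_univ k), hw₁]
  have hcenter : (univ.erase k).centerMass w v = -((w k / (1 - w k)) • v k) := by
    rw [centerMass, hsum, sum_erase_eq_sub (mem_univ k), hv, zero_sub, smul_neg, smul_smul,
      ← div_eq_inv_mul]
  rw [← hcenter]
  exact centerMass_mem_convexHull _ (fun j _ => hw₀ j) (by rwa [hsum, sub_pos])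
    (fun j hj => Set.mem_image_of_mem v (ne_of_mem_erase hj))

theorem infDist_zero_affineSpan_facet_le {E ι : Type*} [NormedAddCommGroup E] [NormedSpace ℝ E]
    [Fintype ι] [DecidableEq ι] {v : ι → E} {w : ι → ℝ} (hw₀ : ∀ j, 0 ≤ w j)
    (hw₁ : ∑ j, w j = 1) (hv : ∑ j, w j • v j = 0) {k : ι} (hk : w k < 1) :
    Metric.infDist 0 (affineSpan ℝ (v '' {j | j ≠ k}) : Set E) ≤ w k / (1 - w k) * ‖v k‖ := by
  refine (Metric.infDist_le_dist_of_mem (convexHull_subset_affineSpan _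
    (neg_smul_mem_convexHull_facet hw₀ hw₁ hv hk))).trans_eq ?_
  rw [dist_zero_left, norm_neg, norm_smul,
    Real.norm_of_nonneg (div_nonneg (hw₀ k) (sub_nonneg.2 hk.le))]

theorem exists_le_one_div_card {ι : Type*} [Fintype ι] [Nonempty ι] {w : ι → ℝ}
    (hw₁ : ∑ j, w j = 1) : ∃ k, w k ≤ 1 / Fintype.card ι := by
  obtain ⟨k, -, hk⟩ := exists_le_of_sum_le (f := w) (g := fun _ => 1 / Fintype.card ι)
    univ_nonempty (by simp [hw₁])
  exact ⟨k, hk⟩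

theorem div_one_sub_le_one_div {a x : ℝ} (hx : 0 < x) (ha : a ≤ 1 / (x + 1)) :
    a / (1 - a) ≤ 1 / x := by
  rw [le_div_iff₀ (by positivity)] at ha
  rw [div_le_div_iff₀ (by nlinarith) hx]
  linarith

theorem stmt_0_general (n : ℕ) (hn : 1 ≤ n)
    (v : Fin (n + 1) → EuclideanSpace ℝ (Fin n))
    (hnorm : ∀ k, ‖v k‖ = 1)
    (lam : Fin (n + 1) → ℝ)
    (hpos : ∀ k, 0 < lam k)
    (hsum : ∑ k, lam k = 1)
    (ho : (0 : EuclideanSpace ℝ (Fin n)) = ∑ k, lam k • v k) :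
    ∃ k, Metric.infDist 0
        (affineSpan ℝ (v '' {j | j ≠ k}) : Set (EuclideanSpace ℝ (Fin n))) ≤ 1 / n := by
  obtain ⟨k, hk⟩ := exists_le_one_div_card hsum
  have hn' : (0 : ℝ) < n := by exact_mod_cast hn
  have hk' : lam k ≤ 1 / ((n : ℝ) + 1) := by simpa using hk
  have hlt : lam k < 1 := hk'.trans_lt ((div_lt_one (by positivity)).2 (by linarith))
  refine ⟨k, (infDist_zero_affineSpan_facet_le (fun j => (hpos j).le) hsum ho.symm hlt).trans ?_⟩
  rw [hnorm k, mul_one]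
  exact div_one_sub_le_one_div hn' hk'

/-- If an affinely independent family of `n+1` points on the unit sphere of `ℝⁿ` has the
origin as a strictly positive convex combination of the vertices, then some facet
hyperplane is at distance at most `1/n` from the origin. -/
theorem stmt_0 (n : ℕ) (hn : 1 ≤ n)
    (v : Fin (n + 1) → EuclideanSpace ℝ (Fin n))
    (hv : AffineIndependent ℝ v)
    (hnorm : ∀ k, ‖v k‖ = 1)
    (lam : Fin (n + 1) → ℝ)
    (hpos : ∀ k, 0 < lam k)
    (hsum : ∑ k, lam k = 1)
    (ho : (0 : EuclideanSpace ℝ (Fin n)) = ∑ k, lam k • v k) :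
    ∃ k, Metric.infDist 0
        (affineSpan ℝ (v '' {j | j ≠ k}) : Set (EuclideanSpace ℝ (Fin n))) ≤ 1 / n :=
  stmt_0_general n hn v hnorm lam hpos hsum ho
end

section
/- Let n ≥ 1 and let v : Fin (n+1) → EuclideanSpace ℝ (Fin n) be an affinely independent family of points all lying on the unit sphere (‖v k‖ = 1 for every k). Suppose the origin 0 lies in the convex hull of the vertices and is equidistant from all facet hyperplanes: there is r ≥ 0 with Metric.infDist 0 (affineSpan ℝ {v j : j ≠ k}) = r for every k. Then r ≤ 1/n, and r = 1/n if and only if the simplex is regular, i.e. all edge lengths ‖v i − v j‖ (for i ≠ j) are equal. -/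
/-!
Let `w` be the barycentric coordinates of the origin and `p k` the foot of the perpendicular from
the origin to the `k`-th facet hyperplane, so `‖p k‖ = r` and `⟪p k, v j⟫ = r²` for `j ≠ k`.
Pairing `p k` with `∑ j, w j • v j = 0` gives `w k (r² - ⟪p k, v k⟫) = r²`, and Cauchy–Schwarz
`⟪p k, v k⟫ ≥ -r` yields `w k ≥ r / (r + 1)`. Summing over the `n + 1` vertices gives
`(n + 1) r ≤ r + 1`, i.e. `r ≤ 1 / n`. Equality forces `p k = -r v k` for every `k`, hence
`⟪v i, v j⟫ = -r` for all `i ≠ j`: all edges are equal. Conversely, if `⟪v i, v j⟫ = a` for all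
`i ≠ j`, pairing `∑ j, w j • v j = 0` with `v k` and with `p k` shows that all weights are equal,
that `a = -1 / n` and that `r = 1 / n`.
-/

open Finset Metric
open scoped RealInnerProductSpace

variable {E : Type*} [NormedAddCommGroup E] [InnerProductSpace ℝ E] {ι : Type*} [Fintype ι]

theorem exists_nonneg_sum_eq_one_of_mem_convexHull_range {v : ι → E} {x : E}
    (hx : x ∈ convexHull ℝ (Set.range v)) :
    ∃ w : ι → ℝ, (∀ i, 0 ≤ w i) ∧ ∑ i, w i = 1 ∧ ∑ i, w i • v i = x := by
  classical
  have hrange : Set.range v =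
      Fintype.linearCombination ℝ v '' Set.range fun i : ι ↦ (Pi.single i 1 : ι → ℝ) := by
    rw [← Set.range_comp]; congr 1; ext i; simp [Fintype.linearCombination_apply]
  rw [hrange, ← LinearMap.image_convexHull, convexHull_rangle_single_eq_stdSimplex] at hx
  obtain ⟨w, ⟨hw0, hw1⟩, rfl⟩ := hx
  exact ⟨w, hw0, hw1, (Fintype.linearCombination_apply ℝ v w).symm⟩

theorem AffineSubspace.exists_mem_norm_eq_infDist_inner_eq (s : AffineSubspace ℝ E) [Nonempty s]
    [s.direction.HasOrthogonalProjection] :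
    ∃ p ∈ s, ‖p‖ = infDist 0 (s : Set E) ∧ ∀ x ∈ s, ⟪p, x⟫ = infDist 0 (s : Set E) ^ 2 := by
  open EuclideanGeometry in
  rw [← dist_orthogonalProjection_eq_infDist, dist_zero_left]
  refine ⟨orthogonalProjection s 0, orthogonalProjection_mem 0, rfl, fun x hx ↦ ?_⟩
  have h : ⟪x - orthogonalProjection s 0, orthogonalProjection s 0⟫ = 0 := by
    simpa using Submodule.inner_right_of_mem_orthogonal
      (vsub_orthogonalProjection_mem_direction 0 hx)
      (orthogonalProjection_vsub_mem_direction_orthogonal s (0 : E))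
  rw [inner_sub_left, real_inner_self_eq_norm_sq, real_inner_comm] at h
  linarith

theorem inner_eq_of_mem_affineSpan {s : Set E} {u x : E} {c : ℝ} (h : ∀ y ∈ s, ⟪u, y⟫ = c)
    (hx : x ∈ affineSpan ℝ s) : ⟪u, x⟫ = c := by
  have : affineSpan ℝ s ≤ (affineSpan ℝ {c}).comap (innerₛₗ ℝ u).toAffineMap :=
    affineSpan_le.2 fun y hy ↦ by simp [h y hy]
  simpa [AffineSubspace.mem_comap] using this hx

theorem mul_sub_inner_eq_of_sum_smul_eq_zero {w : ι → ℝ} {v : ι → E} (hw : ∑ i, w i = 1)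
    (hwv : ∑ i, w i • v i = 0) {p : E} {c : ℝ} {k : ι} (hp : ∀ j ≠ k, ⟪p, v j⟫ = c) :
    w k * (c - ⟪p, v k⟫) = c := by
  have hsingle : ∑ j, w j * (⟪p, v j⟫ - c) = w k * (⟪p, v k⟫ - c) :=
    Finset.sum_eq_single k (fun j _ hj ↦ by rw [hp j hj, sub_self, mul_zero]) (by simp)
  have hzero : ∑ j, w j * ⟪p, v j⟫ = 0 := by
    simp [← real_inner_smul_right, ← inner_sum, hwv]
  simp only [mul_sub, Finset.sum_sub_distrib, ← Finset.sum_mul, hw, hzero] at hsingle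
  linarith

theorem norm_sub_eq_norm_sub_iff_inner_eq {x y x' y' : E} (hx : ‖x‖ = 1) (hy : ‖y‖ = 1)
    (hx' : ‖x'‖ = 1) (hy' : ‖y'‖ = 1) : ‖x - y‖ = ‖x' - y'‖ ↔ ⟪x, y⟫ = ⟪x', y'⟫ := by
  rw [← sq_eq_sq₀ (norm_nonneg _) (norm_nonneg _), norm_sub_sq_real, norm_sub_sq_real,
    hx, hy, hx', hy']
  constructor <;> intro h <;> linarith

/-- Unit vectors `v i` with the origin at barycentric coordinates `w`, and feet `p k` of the
perpendiculars from the origin to the facet hyperplanes, all at distance `r`. -/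
structure IncentredInscribed (v : ι → E) (w : ι → ℝ) (p : ι → E) (r : ℝ) : Prop where
  norm_eq_one : ∀ i, ‖v i‖ = 1
  weight_nonneg : ∀ i, 0 ≤ w i
  sum_weight : ∑ i, w i = 1
  sum_weight_smul : ∑ i, w i • v i = 0
  foot_mem : ∀ k, p k ∈ affineSpan ℝ (v '' {j | j ≠ k})
  norm_foot : ∀ k, ‖p k‖ = r
  inner_foot : ∀ k, ∀ j ≠ k, ⟪p k, v j⟫ = r ^ 2

namespace IncentredInscribed

variable {v : ι → E} {w : ι → ℝ} {p : ι → E} {r : ℝ}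

theorem weight_mul_sub_inner_eq (h : IncentredInscribed v w p r) (k : ι) :
    w k * (r ^ 2 - ⟪p k, v k⟫) = r ^ 2 :=
  mul_sub_inner_eq_of_sum_smul_eq_zero h.sum_weight h.sum_weight_smul (h.inner_foot k)

theorem neg_le_inner (h : IncentredInscribed v w p r) (k : ι) : -r ≤ ⟪p k, v k⟫ := by
  simpa [h.norm_foot k, h.norm_eq_one k] using
    neg_le_of_abs_le (abs_real_inner_le_norm (p k) (v k))

theorem le_weight_mul (h : IncentredInscribed v w p r) (hr : 0 ≤ r) (k : ι) :
    r ≤ w k * (r + 1) := by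
  rcases hr.eq_or_lt with rfl | hr
  · simpa using h.weight_nonneg k
  refine le_of_mul_le_mul_left ?_ hr
  nlinarith [h.weight_mul_sub_inner_eq k, h.neg_le_inner k, h.weight_nonneg k]

theorem card_mul_le (h : IncentredInscribed v w p r) (hr : 0 ≤ r) :
    Fintype.card ι * r ≤ r + 1 :=
  calc Fintype.card ι * r = ∑ _k : ι, r := by simp
    _ ≤ ∑ k, w k * (r + 1) := Finset.sum_le_sum fun k _ ↦ h.le_weight_mul hr k
    _ = r + 1 := by rw [← Finset.sum_mul, h.sum_weight, one_mul]

theorem weight_mul_eq_of_card_mul_eq (h : IncentredInscribed v w p r) (hr : 0 ≤ r)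
    (heq : Fintype.card ι * r = r + 1) (k : ι) : w k * (r + 1) = r := by
  have hsum : ∑ _k : ι, r = ∑ k, w k * (r + 1) := by
    rw [← Finset.sum_mul, h.sum_weight, one_mul]; simpa using heq
  exact ((Finset.sum_eq_sum_iff_of_le fun k _ ↦ h.le_weight_mul hr k).1 hsum k (mem_univ k)).symm

theorem inner_eq_neg_of_card_mul_eq (h : IncentredInscribed v w p r) (hr : 0 < r)
    (heq : Fintype.card ι * r = r + 1) {i j : ι} (hij : i ≠ j) : ⟪v i, v j⟫ = -r := by
  have hii : ⟪p i, v i⟫ = -r := by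
    have hw := h.weight_mul_eq_of_card_mul_eq hr.le heq i
    have hfoot := h.weight_mul_sub_inner_eq i
    have : r * (r ^ 2 - ⟪p i, v i⟫) = r * (r * (r + 1)) := by
      linear_combination (r + 1) * hfoot - (r ^ 2 - ⟪p i, v i⟫) * hw
    linarith [mul_left_cancel₀ hr.ne' this]
  have hpv : ⟪p i, -v i⟫ = ‖p i‖ * ‖-v i‖ := by
    rw [inner_neg_right, hii, norm_neg, h.norm_foot i, h.norm_eq_one i, neg_neg, mul_one]
  have hp : p i = r • -v i := by
    simpa [h.norm_foot i, h.norm_eq_one i] using inner_eq_norm_mul_iff_real.1 hpv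
  have := h.inner_foot i j hij.symm
  rw [hp, real_inner_smul_left, inner_neg_left] at this
  exact mul_left_cancel₀ hr.ne' (by linarith)

theorem card_mul_eq_of_inner_eq (h : IncentredInscribed v w p r) (hr : 0 ≤ r) {a : ℝ}
    (ha : ∀ i j, i ≠ j → ⟪v i, v j⟫ = a) : Fintype.card ι * r = r + 1 := by
  have hw k : w k * (a - 1) = a := by
    simpa [real_inner_self_eq_norm_sq, h.norm_eq_one k] using
      mul_sub_inner_eq_of_sum_smul_eq_zero h.sum_weight h.sum_weight_smul (p := v k)
        fun j hj ↦ ha k j hj.symm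
  have hfoot k : w k * (r ^ 2 - a) = r ^ 2 := by
    have hpa : ⟪v k, p k⟫ = a := inner_eq_of_mem_affineSpan
      (by rintro _ ⟨j, hj, rfl⟩; exact ha k j (Ne.symm hj)) (h.foot_mem k)
    simpa [real_inner_comm, hpa] using h.weight_mul_sub_inner_eq k
  have hsum {b c : ℝ} (hbc : ∀ k, w k * b = c) : b = Fintype.card ι * c := by
    simpa [← Finset.sum_mul, h.sum_weight] using Fintype.sum_congr _ _ hbc
  have hA := hsum hw
  have hR := hsum hfoot
  have hcard : (1 : ℝ) ≤ Fintype.card ι := by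
    obtain ⟨k, -, -⟩ := Finset.exists_ne_zero_of_sum_ne_zero (h.sum_weight ▸ one_ne_zero)
    exact_mod_cast Fintype.card_pos_iff.2 ⟨k⟩
  have hsq : ((Fintype.card ι - 1) * r) ^ 2 = 1 := by
    linear_combination (1 - (Fintype.card ι : ℝ)) * hR + hA
  have := (pow_eq_one_iff_of_nonneg (by nlinarith) two_ne_zero).1 hsq
  linarith

end IncentredInscribed

theorem stmt_1_general (n : ℕ) (hn : 1 ≤ n)
    (v : Fin (n + 1) → EuclideanSpace ℝ (Fin n))
    (hnorm : ∀ k, ‖v k‖ = 1)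
    (h0 : (0 : EuclideanSpace ℝ (Fin n)) ∈ convexHull ℝ (Set.range v))
    (r : ℝ) (hr : 0 ≤ r)
    (hd : ∀ k, Metric.infDist 0
        (affineSpan ℝ (v '' {j | j ≠ k}) : Set (EuclideanSpace ℝ (Fin n))) = r) :
    r ≤ 1 / n ∧
      (r = 1 / n ↔
        ∀ i j i' j' : Fin (n + 1), i ≠ j → i' ≠ j' → ‖v i - v j‖ = ‖v i' - v j'‖) := by
  have : Nontrivial (Fin (n + 1)) := Fin.nontrivial_iff_two_le.2 (by omega)
  obtain ⟨w, hw0, hw1, hwv⟩ := exists_nonneg_sum_eq_one_of_mem_convexHull_range h0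
  have hfoot k : ∃ p ∈ affineSpan ℝ (v '' {j | j ≠ k}), ‖p‖ = r ∧ ∀ j ≠ k, ⟪p, v j⟫ = r ^ 2 := by
    obtain ⟨j, hj⟩ := exists_ne k
    have : Nonempty (affineSpan ℝ (v '' {j | j ≠ k})) := ⟨⟨v j, mem_affineSpan ℝ ⟨j, hj, rfl⟩⟩⟩
    obtain ⟨p, hp, hpr, hpv⟩ :=
      (affineSpan ℝ (v '' {j | j ≠ k})).exists_mem_norm_eq_infDist_inner_eq
    exact ⟨p, hp, hd k ▸ hpr, fun j hj ↦ hd k ▸ hpv _ (mem_affineSpan ℝ ⟨j, hj, rfl⟩)⟩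
  choose p hp_mem hp_norm hp_inner using hfoot
  have h : IncentredInscribed v w p r := ⟨hnorm, hw0, hw1, hwv, hp_mem, hp_norm, hp_inner⟩
  have hn' : (0 : ℝ) < n := by exact_mod_cast hn
  have hcard : (Fintype.card (Fin (n + 1)) : ℝ) * r = r + 1 ↔ r = 1 / n := by
    rw [Fintype.card_fin, eq_div_iff hn'.ne']; push_cast; constructor <;> intro <;> linarith
  have hedge i j i' j' : ‖v i - v j‖ = ‖v i' - v j'‖ ↔ ⟪v i, v j⟫ = ⟪v i', v j'⟫ :=
    norm_sub_eq_norm_sub_iff_inner_eq (hnorm i) (hnorm j) (hnorm i') (hnorm j')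
  refine ⟨?_, fun hr1 ↦ ?_, fun hreg ↦ ?_⟩
  · have := h.card_mul_le hr
    rw [Fintype.card_fin] at this; push_cast at this
    rw [le_div_iff₀ hn']; linarith
  · have hr0 : 0 < r := hr1 ▸ by positivity
    intro i j i' j' hij hij'
    rw [hedge, h.inner_eq_neg_of_card_mul_eq hr0 (hcard.2 hr1) hij,
      h.inner_eq_neg_of_card_mul_eq hr0 (hcard.2 hr1) hij']
  · obtain ⟨i₀, j₀, h₀⟩ := exists_pair_ne (Fin (n + 1))
    exact hcard.1 <| h.card_mul_eq_of_inner_eq hr fun i j hij ↦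
      (hedge _ _ _ _).1 (hreg i j i₀ j₀ hij h₀)

/-- A simplex inscribed in the unit sphere of `ℝⁿ` whose incenter is the origin has
inradius `r ≤ 1/n`, with equality iff the simplex is regular (all edges have equal
length). -/
theorem stmt_1 (n : ℕ) (hn : 1 ≤ n)
    (v : Fin (n + 1) → EuclideanSpace ℝ (Fin n))
    (hv : AffineIndependent ℝ v)
    (hnorm : ∀ k, ‖v k‖ = 1)
    (h0 : (0 : EuclideanSpace ℝ (Fin n)) ∈ convexHull ℝ (Set.range v))
    (r : ℝ) (hr : 0 ≤ r)
    (hd : ∀ k, Metric.infDist 0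
        (affineSpan ℝ (v '' {j | j ≠ k}) : Set (EuclideanSpace ℝ (Fin n))) = r) :
    r ≤ 1 / n ∧
      (r = 1 / n ↔
        ∀ i j i' j' : Fin (n + 1), i ≠ j → i' ≠ j' → ‖v i - v j‖ = ‖v i' - v j'‖) :=
  stmt_1_general n hn v hnorm h0 r hr hd
end

section
/- Let n ≥ 1, let v : Fin (n+1) → EuclideanSpace ℝ (Fin n) satisfy ‖v k‖ = 1 for all k, and suppose 0 = ∑_k λ_k • v_k where λ_k > 0 for all k and ∑_k λ_k = 1. Then for every index k, the distance from the origin to the k-th facet hyperplane satisfies Metric.infDist 0 (affineSpan ℝ {v j : j ≠ k}) ≤ λ_k / (1 − λ_k). -/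
/-!
Dividing `∑ j ≠ k, λ_j • v_j = -λ_k • v_k` by `∑ j ≠ k, λ_j = 1 - λ_k` exhibits
`(-λ_k / (1 - λ_k)) • v_k` as an affine combination of the `v_j` with `j ≠ k`, so this point lies
on the `k`-th facet hyperplane, at distance `λ_k / (1 - λ_k)` from the origin.
-/

open Finset

theorem smul_mem_affineSpan_image_ne {k V ι : Type*} [Field k] [AddCommGroup V] [Module k V]
    [Fintype ι] [DecidableEq ι] {v : ι → V} {w : ι → k} (hw : ∑ i, w i = 1)
    (hv : ∑ i, w i • v i = 0) {j : ι} (hj : w j ≠ 1) :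
    (-w j / (1 - w j)) • v j ∈ affineSpan k (v '' {i | i ≠ j}) := by
  have hw' : ∑ i ∈ univ.erase j, w i / (1 - w j) = 1 := by
    rw [← sum_div, sum_erase_eq_sub (mem_univ j), hw, div_self (sub_ne_zero.2 hj.symm)]
  have hv' : ∑ i ∈ univ.erase j, w i • v i = -(w j • v j) := by
    rw [sum_erase_eq_sub (mem_univ j), hv, zero_sub]
  have hcomb : (univ.erase j).affineCombination k v (fun i ↦ w i / (1 - w j)) =
      (-w j / (1 - w j)) • v j := by
    simp_rw [affineCombination_eq_linear_combination _ _ _ hw', div_eq_inv_mul, mul_smul]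
    rw [← smul_sum, hv', neg_smul, smul_neg]
  rw [← hcomb]
  exact affineCombination_mem_affineSpan_image hw' (fun i hi hij ↦ absurd (ne_of_mem_erase hi) hij) v

theorem infDist_zero_affineSpan_image_ne_le {V ι : Type*} [NormedAddCommGroup V]
    [NormedSpace ℝ V] [Fintype ι] [DecidableEq ι] {v : ι → V} {w : ι → ℝ}
    (hw : ∑ i, w i = 1) (hv : ∑ i, w i • v i = 0) {j : ι} (hj : w j ≠ 1) :
    Metric.infDist 0 (affineSpan ℝ (v '' {i | i ≠ j}) : Set V) ≤ |w j / (1 - w j)| * ‖v j‖ := by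
  refine (Metric.infDist_le_dist_of_mem (smul_mem_affineSpan_image_ne hw hv hj)).trans_eq ?_
  rw [dist_zero_left, norm_smul, Real.norm_eq_abs, neg_div, abs_neg]

/-- Barycentric bound: if the origin is the convex combination `∑ λ_k • v_k` of points
on the unit sphere, the distance from the origin to the `k`-th facet hyperplane is at
most `λ_k / (1 - λ_k)`. -/
theorem stmt_2 (n : ℕ) (hn : 1 ≤ n)
    (v : Fin (n + 1) → EuclideanSpace ℝ (Fin n))
    (hnorm : ∀ k, ‖v k‖ = 1)
    (lam : Fin (n + 1) → ℝ)
    (hpos : ∀ k, 0 < lam k)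
    (hsum : ∑ k, lam k = 1)
    (ho : (0 : EuclideanSpace ℝ (Fin n)) = ∑ k, lam k • v k) :
    ∀ k, Metric.infDist 0
        (affineSpan ℝ (v '' {j | j ≠ k}) : Set (EuclideanSpace ℝ (Fin n)))
      ≤ lam k / (1 - lam k) := by
  intro k
  obtain ⟨j, hjk⟩ := Fintype.exists_ne_of_one_lt_card (by simp; omega) k
  have hlt : lam k < 1 :=
    hsum ▸ single_lt_sum hjk (mem_univ k) (mem_univ j) (hpos j) fun i _ _ ↦ (hpos i).le
  have hbound := infDist_zero_affineSpan_image_ne_le hsum ho.symm hlt.ne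
  rwa [hnorm, mul_one, abs_of_pos (div_pos (hpos k) (sub_pos.2 hlt))] at hbound
end

section
/- Let n ≥ 1, let v : Fin (n+1) → EuclideanSpace ℝ (Fin n) satisfy ‖v k‖ = 1 for all k, and suppose 0 = ∑_k λ_k • v_k where λ_k > 0 for all k and ∑_k λ_k = 1. If for some index k the equality Metric.infDist 0 (affineSpan ℝ {v j : j ≠ k}) = λ_k / (1 − λ_k) holds, then v_k is orthogonal to the direction of the k-th facet hyperplane: for all indices i, j different from k, the inner product ⟪v k, v i − v j⟫ = 0. -/
/-! The facet hyperplane opposite `v k` contains `p = (-λ_k / (1 - λ_k)) • v k`: normalising the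
weights of `∑_{j ≠ k} λ_j • v j = -λ_k • v k` exhibits `p` as an affine combination of the other
vertices. Since `‖p‖ = λ_k / (1 - λ_k)` is the distance from `0` to the hyperplane, `p` is the
orthogonal projection of `0` onto it, so `p`, and with it `v k`, is orthogonal to its direction. -/

open Finset

theorem lt_one_of_sum_eq_one {ι : Type*} [Fintype ι] [Nontrivial ι] {w : ι → ℝ}
    (hpos : ∀ i, 0 < w i) (hw : ∑ i, w i = 1) (k : ι) : w k < 1 := by
  classical
  obtain ⟨j, hj⟩ := exists_ne k
  have hpair : w k + w j ≤ ∑ i, w i := by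
    rw [← sum_pair hj.symm]
    exact sum_le_sum_of_subset_of_nonneg (subset_univ _) fun i _ _ => (hpos i).le
  linarith [hpos j]

theorem smul_mem_affineSpan_image_ne_of_sum_smul_eq_zero {ι 𝕜 V : Type*} [Fintype ι] [Field 𝕜]
    [AddCommGroup V] [Module 𝕜 V] {v : ι → V} {w : ι → 𝕜} (hw : ∑ i, w i = 1)
    (hv : ∑ i, w i • v i = 0) {k : ι} (hk : w k ≠ 1) :
    (-w k / (1 - w k)) • v k ∈ affineSpan 𝕜 (v '' {j | j ≠ k}) := by
  classical
  have hk' : 1 - w k ≠ 0 := sub_ne_zero.2 hk.symm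
  have hsum : ∑ i ∈ univ.erase k, w i / (1 - w k) = 1 := by
    rw [← sum_div, sum_erase_eq_sub (mem_univ k), hw, div_self hk']
  have hrest : ∑ i ∈ univ.erase k, w i • v i = -(w k • v k) := by
    rw [sum_erase_eq_sub (mem_univ k), hv, zero_sub]
  have hcomb : (univ.erase k).affineCombination 𝕜 v (fun i => w i / (1 - w k))
      = (-w k / (1 - w k)) • v k := by
    rw [affineCombination_eq_linear_combination _ _ _ hsum]
    simp_rw [div_eq_inv_mul, mul_smul]
    rw [← smul_sum, hrest, smul_neg, neg_smul, smul_neg]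
  rw [← hcomb]
  refine affineCombination_mem_affineSpan_image hsum (fun i hi hik => ?_) v
  exact absurd (ne_of_mem_erase hi) hik

theorem vsub_mem_direction_orthogonal_of_dist_eq_infDist {V P : Type*} [NormedAddCommGroup V]
    [InnerProductSpace ℝ V] [MetricSpace P] [NormedAddTorsor V P] {s : AffineSubspace ℝ P}
    [s.direction.HasOrthogonalProjection] {x p : P} (hp : p ∈ s)
    (h : dist x p = Metric.infDist x s) : x -ᵥ p ∈ s.directionᗮ := by
  have : Nonempty s := ⟨⟨p, hp⟩⟩
  have hproj : (EuclideanGeometry.orthogonalProjection s x : P) = p :=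
    (EuclideanGeometry.dist_orthogonalProjection_eq_dist_iff_eq_of_mem hp).1
      (by rw [h, EuclideanGeometry.dist_orthogonalProjection_eq_infDist])
  simpa [hproj] using EuclideanGeometry.vsub_orthogonalProjection_mem_direction_orthogonal s x

/-- Equality analysis: if the distance from the origin to the `k`-th facet hyperplane
equals `λ_k / (1 - λ_k)`, then `v k` is orthogonal to the direction of that facet
hyperplane. -/
theorem stmt_3 (n : ℕ) (hn : 1 ≤ n)
    (v : Fin (n + 1) → EuclideanSpace ℝ (Fin n))
    (hnorm : ∀ k, ‖v k‖ = 1)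
    (lam : Fin (n + 1) → ℝ)
    (hpos : ∀ k, 0 < lam k)
    (hsum : ∑ k, lam k = 1)
    (ho : (0 : EuclideanSpace ℝ (Fin n)) = ∑ k, lam k • v k)
    (k : Fin (n + 1))
    (heq : Metric.infDist 0
        (affineSpan ℝ (v '' {j | j ≠ k}) : Set (EuclideanSpace ℝ (Fin n)))
      = lam k / (1 - lam k)) :
    ∀ i j : Fin (n + 1), i ≠ k → j ≠ k → (inner ℝ (v k) (v i - v j) : ℝ) = 0 := by
  intro i j hi hj
  have : Nontrivial (Fin (n + 1)) := Fin.nontrivial_iff_two_le.2 (by omega)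
  have hk : lam k < 1 := lt_one_of_sum_eq_one hpos hsum k
  have hc : -lam k / (1 - lam k) ≠ 0 := div_ne_zero (neg_ne_zero.2 (hpos k).ne') (by linarith)
  have hp := smul_mem_affineSpan_image_ne_of_sum_smul_eq_zero hsum ho.symm hk.ne
  have hdist : dist 0 ((-lam k / (1 - lam k)) • v k)
      = Metric.infDist 0 (affineSpan ℝ (v '' {j | j ≠ k}) : Set (EuclideanSpace ℝ (Fin n))) := by
    rw [heq, dist_zero_left, norm_smul, hnorm, mul_one, Real.norm_eq_abs, abs_div, abs_neg,
      abs_of_pos (hpos k), abs_of_pos (by linarith)]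
  have horth := vsub_mem_direction_orthogonal_of_dist_eq_infDist hp hdist
  have hdir : v i - v j ∈ (affineSpan ℝ (v '' {j | j ≠ k})).direction :=
    AffineSubspace.vsub_mem_direction (subset_affineSpan ℝ _ ⟨i, hi, rfl⟩)
      (subset_affineSpan ℝ _ ⟨j, hj, rfl⟩)
  have hinner := Submodule.inner_left_of_mem_orthogonal hdir horth
  rw [vsub_eq_sub, zero_sub, inner_neg_left, inner_smul_left, neg_eq_zero] at hinner
  simpa [hc] using hinner
end

section
/- Let V be a real vector space, B : V →ₗ[ℝ] V →ₗ[ℝ] ℝ a symmetric bilinear form, and δ > 0 a real number. Let o, u, w ∈ V satisfy B o o = 1, B u u = −1, B w w = −1, B o u = Real.sinh δ and B o w = Real.sinh δ. Define u′ = (Real.cosh δ)⁻¹ • o + (Real.tanh δ) • u and w′ = (Real.cosh δ)⁻¹ • o + (Real.tanh δ) • w. Then B u′ w′ = 1 + (Real.tanh δ)² * (1 + B u w). -/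
theorem LinearMap.apply_add_smul_add_smul {R M : Type*} [CommRing R] [AddCommGroup M] [Module R M]
    (B : M →ₗ[R] M →ₗ[R] R) (a b : R) (o u w : M) :
    B (a • o + b • u) (a • o + b • w)
      = a ^ 2 * B o o + a * b * (B o w + B u o) + b ^ 2 * B u w := by
  simp only [map_add, map_smul, LinearMap.add_apply, LinearMap.smul_apply, smul_eq_mul]
  ring

theorem Real.inv_cosh_mul_sinh (x : ℝ) : (cosh x)⁻¹ * sinh x = tanh x := by
  rw [tanh_eq_sinh_div_cosh, div_eq_inv_mul]

theorem Real.inv_cosh_sq (x : ℝ) : (cosh x)⁻¹ ^ 2 = 1 - tanh x ^ 2 := by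
  rw [tanh_eq_sinh_div_cosh]
  field_simp
  linear_combination -cosh_sq_sub_sinh_sq x

theorem stmt_14_general {V : Type*} [AddCommGroup V] [Module ℝ V]
    (B : V →ₗ[ℝ] V →ₗ[ℝ] ℝ) (hB : ∀ x y, B x y = B y x)
    (δ : ℝ) (o u w : V)
    (hoo : B o o = 1)
    (hou : B o u = Real.sinh δ) (how : B o w = Real.sinh δ) :
    B ((Real.cosh δ)⁻¹ • o + Real.tanh δ • u)
        ((Real.cosh δ)⁻¹ • o + Real.tanh δ • w)
      = 1 + Real.tanh δ ^ 2 * (1 + B u w) := by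
  rw [B.apply_add_smul_add_smul, hoo, how, hB u o, hou, Real.inv_cosh_sq]
  linear_combination 2 * Real.tanh δ * Real.inv_cosh_mul_sinh δ

/-- The identity `⟨v_i' ∣ v_j'⟩ = 1 + tanh²(δ)(1 + ⟨v_i⋆ ∣ v_j⋆⟩)` for the tangency
points of the inscribed sphere, in Minkowski space with symmetric bilinear form `B`. -/
theorem stmt_14 {V : Type*} [AddCommGroup V] [Module ℝ V]
    (B : V →ₗ[ℝ] V →ₗ[ℝ] ℝ) (hB : ∀ x y, B x y = B y x)
    (δ : ℝ) (hδ : 0 < δ) (o u w : V)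
    (hoo : B o o = 1) (huu : B u u = -1) (hww : B w w = -1)
    (hou : B o u = Real.sinh δ) (how : B o w = Real.sinh δ) :
    B ((Real.cosh δ)⁻¹ • o + Real.tanh δ • u)
        ((Real.cosh δ)⁻¹ • o + Real.tanh δ • w)
      = 1 + Real.tanh δ ^ 2 * (1 + B u w) :=
  stmt_14_general B hB δ o u w hoo hou how
end

section
/- Let n ≥ 1 and let v : Fin (n+1) → EuclideanSpace ℝ (Fin n) be an affinely independent family. Then there exists a unique point p in the convex hull of {v k : k} such that the distances from p to all facet hyperplanes are equal: for all indices i and j, Metric.infDist p (affineSpan ℝ {v l : l ≠ i}) = Metric.infDist p (affineSpan ℝ {v l : l ≠ j}). -/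
/-!
The incenter of a simplex is the unique point of its affine span whose signed distances to all
facet hyperplanes agree (`Affine.Simplex.exists_forall_signedInfDist_eq_iff_eq_incenter`). On the
closed simplex, the convex hull of the vertices, every signed distance is nonnegative and hence
equal to the distance `Metric.infDist`.
-/

namespace Affine.Simplex

variable {V P : Type*} [NormedAddCommGroup V] [InnerProductSpace ℝ V] [MetricSpace P]
  [NormedAddTorsor V P] {n : ℕ} [NeZero n] (s : Simplex ℝ P n)

lemma abs_signedInfDist_eq_infDist (i : Fin (n + 1)) {p : P}
    (hp : p ∈ affineSpan ℝ (Set.range s.points)) :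
    |s.signedInfDist i p| = Metric.infDist p (affineSpan ℝ (s.points '' {i}ᶜ)) := by
  rw [abs_signedInfDist_eq_dist_of_mem_affineSpan_range i hp, orthogonalProjectionSpan,
    EuclideanGeometry.dist_orthogonalProjection_eq_infDist, range_faceOpposite_points]

lemma signedInfDist_nonneg_of_mem_closedInterior (i : Fin (n + 1)) {p : P}
    (hp : p ∈ s.closedInterior) : 0 ≤ s.signedInfDist i p := by
  obtain ⟨w, hw, hwI, rfl⟩ := hp
  rw [signedInfDist_affineCombination _ _ hw]
  exact mul_nonneg (hwI i).1 (norm_nonneg _)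

lemma incenter_mem_closedInterior : s.incenter ∈ s.closedInterior :=
  s.interior_subset_closedInterior s.incenter_mem_interior

lemma infDist_incenter (i : Fin (n + 1)) :
    Metric.infDist s.incenter (affineSpan ℝ (s.points '' {i}ᶜ)) = s.inradius := by
  rw [← s.abs_signedInfDist_eq_infDist i s.incenter_mem_affineSpan_range,
    signedInfDist_incenter, abs_of_nonneg s.inradius_pos.le]

lemma forall_infDist_eq_iff_eq_incenter {p : P} (hp : p ∈ s.closedInterior) :
    (∀ i j, Metric.infDist p (affineSpan ℝ (s.points '' {i}ᶜ)) =
      Metric.infDist p (affineSpan ℝ (s.points '' {j}ᶜ))) ↔ p = s.incenter := by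
  refine ⟨fun h ↦ ?_, ?_⟩
  · have hspan := closedInterior_subset_affineSpan hp
    refine (s.exists_forall_signedInfDist_eq_iff_eq_incenter hspan).1
      ⟨Metric.infDist p (affineSpan ℝ (s.points '' {0}ᶜ)), fun i ↦ ?_⟩
    rw [← abs_of_nonneg (s.signedInfDist_nonneg_of_mem_closedInterior i hp),
      s.abs_signedInfDist_eq_infDist i hspan, h i 0]
  · rintro rfl i j
    rw [infDist_incenter, infDist_incenter]

end Affine.Simplex

/-- Existence and uniqueness of the incenter: a Euclidean simplex has a unique point of
its convex hull equidistant from all facet hyperplanes. -/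
theorem stmt_16 (n : ℕ) (hn : 1 ≤ n)
    (v : Fin (n + 1) → EuclideanSpace ℝ (Fin n))
    (hv : AffineIndependent ℝ v) :
    ∃! p : EuclideanSpace ℝ (Fin n),
      p ∈ convexHull ℝ (Set.range v) ∧
        ∀ i j : Fin (n + 1),
          Metric.infDist p (affineSpan ℝ (v '' {l | l ≠ i}) : Set (EuclideanSpace ℝ (Fin n)))
            = Metric.infDist p
                (affineSpan ℝ (v '' {l | l ≠ j}) : Set (EuclideanSpace ℝ (Fin n))) := by
  have : NeZero n := ⟨by omega⟩
  let s : Affine.Simplex ℝ (EuclideanSpace ℝ (Fin n)) n := ⟨v, hv⟩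
  change ∃! p, p ∈ convexHull ℝ (Set.range s.points) ∧ ∀ i j : Fin (n + 1),
    Metric.infDist p (affineSpan ℝ (s.points '' {i}ᶜ)) =
      Metric.infDist p (affineSpan ℝ (s.points '' {j}ᶜ))
  rw [s.convexHull_eq_closedInterior]
  exact ⟨s.incenter, ⟨s.incenter_mem_closedInterior,
      (s.forall_infDist_eq_iff_eq_incenter s.incenter_mem_closedInterior).2 rfl⟩,
    fun q ⟨hq, hdist⟩ ↦ (s.forall_infDist_eq_iff_eq_incenter hq).1 hdist⟩
end

section
/- Let n ≥ 1 and let v : Fin (n+1) → EuclideanSpace ℝ (Fin n) be an affinely independent family. Suppose p lies in the convex hull of {v k : k} and there is r ≥ 0 such that Metric.infDist p (affineSpan ℝ {v l : l ≠ k}) = r for every k. Then, with S = ⋃_k convexHull ℝ {v l : l ≠ k} the union of the facets ((n−1)-skeleton), we have Metric.infDist p S = r, and for every q in the convex hull of {v k : k} with q ≠ p, Metric.infDist q S < r. -/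
/-! Let `λᵢ` be the barycentric coordinates of the simplex and `hᵢ > 0` the distance from the
vertex `vᵢ` to the hyperplane `Hᵢ` through the opposite facet. The signed distance to `Hᵢ` is
affine and vanishes at the other vertices, so `dist(x, Hᵢ) = |λᵢ(x)| hᵢ`. For `q` in the simplex,
walk from `q` to its nearest point on `Hᵢ`; by the intermediate value theorem applied to
`minⱼ λⱼ`, the segment meets a facet, so `dist(q, skeleton) ≤ λᵢ(q) hᵢ` for every `i`. The facets
lie in the hyperplanes, so the equidistant point `p` is at distance exactly `r` from the skeleton.
If `q ≠ p`, both coordinate vectors sum to `1`, so `λₖ(q) < λₖ(p)` for some `k`, and then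
`dist(q, skeleton) ≤ λₖ(q) hₖ < λₖ(p) hₖ = r`. -/

open Metric Set

namespace AffineBasis

variable {ι k V P E : Type*}

section Ring

variable [Ring k] [AddCommGroup V] [Module k V] [AddTorsor V P] (b : AffineBasis ι k P)

theorem apply_eq_coord_mul_of_apply_eq_zero [Fintype ι] (φ : P →ᵃ[k] k) {i : ι}
    (hφ : ∀ j, j ≠ i → φ (b j) = 0) (x : P) : φ x = b.coord i x * φ (b i) := by
  classical
  have hw := b.sum_coord_apply_eq_one x
  conv_lhs => rw [← b.affineCombination_coord_eq_self x]
  rw [Finset.map_affineCombination _ _ _ hw,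
    Finset.affineCombination_eq_linear_combination _ _ _ hw,
    Finset.sum_eq_single i (fun j _ hj => by simp [hφ j hj]) (by simp)]
  simp

theorem nonempty_image_ne [Nontrivial ι] (i : ι) : (b '' {j | j ≠ i}).Nonempty :=
  let ⟨j, hj⟩ := exists_ne i
  ⟨b j, j, hj, rfl⟩

theorem coord_eq_zero_of_mem_affineSpan_image_ne {i : ι} {y : P}
    (hy : y ∈ affineSpan k (b '' {j | j ≠ i})) : b.coord i y = 0 := by
  have hle : affineSpan k (b '' {j | j ≠ i}) ≤ (affineSpan k {(0 : k)}).comap (b.coord i) := by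
    rw [affineSpan_le]
    rintro _ ⟨j, hj, rfl⟩
    simp [b.coord_apply_ne (Ne.symm hj)]
  simpa using hle hy

end Ring

section Field

variable [Field k] [LinearOrder k] [IsStrictOrderedRing k] [AddCommGroup E] [Module k E]
  (b : AffineBasis ι k E)

def skeleton : Set E := ⋃ i, convexHull k (b '' {j | j ≠ i})

variable [Fintype ι]

theorem exists_coord_lt_of_ne {p q : E} (hqp : q ≠ p) : ∃ i, b.coord i q < b.coord i p := by
  by_contra! h
  refine hqp (b.ext_elem fun i => ?_)
  have hsum : ∑ i, b.coord i p = ∑ i, b.coord i q := by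
    rw [b.sum_coord_apply_eq_one, b.sum_coord_apply_eq_one]
  exact ((Finset.sum_eq_sum_iff_of_le fun i _ => h i).mp hsum i (Finset.mem_univ i)).symm

theorem mem_convexHull_image_ne {i : ι} {z : E} (h0 : ∀ j, 0 ≤ b.coord j z)
    (hi : b.coord i z = 0) : z ∈ convexHull k (b '' {j | j ≠ i}) := by
  have hw := b.sum_coord_apply_eq_one z
  have hz : Finset.univ.centerMass (fun j => b.coord j z) b = z := by
    rw [Finset.centerMass_eq_of_sum_1 _ _ hw, b.linear_combination_coord_eq_self]
  rw [← hz, ← Finset.centerMass_filter_ne_zero]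
  refine Finset.centerMass_mem_convexHull _ (fun j _ => h0 j) ?_ fun j hj => ?_
  · rw [Finset.sum_filter_ne_zero, hw]
    exact one_pos
  · exact ⟨j, fun hji => (Finset.mem_filter.1 hj).2 (hji ▸ hi), rfl⟩

end Field

section Normed

variable [NormedAddCommGroup E] [NormedSpace ℝ E] (b : AffineBasis ι ℝ E)

theorem le_infDist_skeleton [Nontrivial ι] {p : E} {r : ℝ}
    (h : ∀ i, r ≤ infDist p (affineSpan ℝ (b '' {j | j ≠ i}))) : r ≤ infDist p b.skeleton := by
  obtain ⟨i⟩ := b.nonempty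
  obtain ⟨x, hx⟩ := b.nonempty_image_ne i
  rw [skeleton, le_infDist ⟨x, mem_iUnion.2 ⟨i, subset_convexHull ℝ _ hx⟩⟩]
  intro z hz
  obtain ⟨i, hi⟩ := mem_iUnion.1 hz
  exact (h i).trans (infDist_le_dist_of_mem (convexHull_subset_affineSpan _ hi))

variable [Fintype ι]

theorem exists_mem_skeleton_dist_le {q y : E} (hq : ∀ i, 0 ≤ b.coord i q) {i : ι}
    (hy : b.coord i y ≤ 0) : ∃ z ∈ b.skeleton, dist q z ≤ dist q y := by
  have := b.finiteDimensional
  have hne : (Finset.univ : Finset ι).Nonempty := ⟨i, Finset.mem_univ i⟩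
  let c : ℝ → E := AffineMap.lineMap q y
  let g : ℝ → ℝ := fun t => Finset.univ.inf' hne fun l => b.coord l (c t)
  have hg : Continuous g := Continuous.finset_inf'_apply hne fun l _ =>
    (continuous_barycentric_coord b l).comp AffineMap.lineMap_continuous
  obtain ⟨t, ht, hgt⟩ : ∃ t ∈ Icc (0 : ℝ) 1, g t = 0 :=
    intermediate_value_Icc' zero_le_one hg.continuousOn
      ⟨(Finset.inf'_le _ (Finset.mem_univ i)).trans (by simpa [c] using hy),
        Finset.le_inf' _ _ fun j _ => by simpa [c] using hq j⟩
  obtain ⟨j, -, hj⟩ := Finset.exists_mem_eq_inf' hne fun l => b.coord l (c t)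
  refine ⟨c t, mem_iUnion.2 ⟨j, b.mem_convexHull_image_ne (fun l => ?_) (hj ▸ hgt)⟩, ?_⟩
  · exact hgt ▸ Finset.inf'_le _ (Finset.mem_univ l)
  · rw [dist_comm, dist_lineMap_left, Real.norm_of_nonneg ht.1]
    exact mul_le_of_le_one_left dist_nonneg ht.2

theorem infDist_affineSpan_image_ne_pos [Nontrivial ι] (i : ι) :
    0 < infDist (b i) (affineSpan ℝ (b '' {j | j ≠ i})) := by
  have := b.finiteDimensional
  refine ((AffineSubspace.closed_of_finiteDimensional _).notMem_iff_infDist_pos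
    ((b.nonempty_image_ne i).mono (subset_affineSpan ℝ _))).1 fun h => ?_
  simpa using b.coord_eq_zero_of_mem_affineSpan_image_ne h

end Normed

section Euclidean

variable [NormedAddCommGroup E] [InnerProductSpace ℝ E] [Fintype ι] [Nontrivial ι]
  (b : AffineBasis ι ℝ E)

theorem infDist_affineSpan_image_ne (i : ι) (x : E) :
    infDist x (affineSpan ℝ (b '' {j | j ≠ i})) =
      |b.coord i x| * infDist (b i) (affineSpan ℝ (b '' {j | j ≠ i})) := by
  have := b.finiteDimensional
  set H := affineSpan ℝ (b '' {j | j ≠ i})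
  have : Nonempty H := ((b.nonempty_image_ne i).mono (subset_affineSpan ℝ _)).to_subtype
  have hspan : affineSpan ℝ (insert (b i) (H : Set E)) = ⊤ := by
    refine eq_top_iff.2 (b.tot ▸ affineSpan_mono ℝ ?_)
    rintro _ ⟨j, rfl⟩
    obtain rfl | hj := eq_or_ne j i
    · exact mem_insert _ _
    · exact mem_insert_of_mem _ (subset_affineSpan ℝ _ ⟨j, hj, rfl⟩)
  have hdist (y : E) : infDist y H = |H.signedInfDist (b i) y| := by
    rw [AffineSubspace.abs_signedInfDist_eq_dist_of_mem_affineSpan_insert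
      (hspan ▸ AffineSubspace.mem_top ℝ E y), EuclideanGeometry.dist_orthogonalProjection_eq_infDist]
  rw [hdist, hdist, ← ContinuousAffineMap.coe_toAffineMap,
    b.apply_eq_coord_mul_of_apply_eq_zero _ (fun j hj => ?_) x, abs_mul]
  exact AffineSubspace.signedInfDist_apply_of_mem _ (subset_affineSpan ℝ _ ⟨j, hj, rfl⟩)

theorem infDist_skeleton_le {q : E} (hq : ∀ j, 0 ≤ b.coord j q) (i : ι) :
    infDist q b.skeleton ≤ b.coord i q * infDist (b i) (affineSpan ℝ (b '' {j | j ≠ i})) := by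
  have := b.finiteDimensional
  obtain ⟨y, hyH, hy⟩ := (AffineSubspace.closed_of_finiteDimensional _).exists_infDist_eq_dist
    ((b.nonempty_image_ne i).mono (subset_affineSpan ℝ _)) q
  obtain ⟨z, hzS, hz⟩ :=
    b.exists_mem_skeleton_dist_le hq (b.coord_eq_zero_of_mem_affineSpan_image_ne hyH).le
  calc infDist q b.skeleton ≤ dist q z := infDist_le_dist_of_mem hzS
    _ ≤ dist q y := hz
    _ = _ := by rw [← hy, b.infDist_affineSpan_image_ne, abs_of_nonneg (hq i)]

end Euclidean

end AffineBasis

theorem stmt_17_general (n : ℕ) (hn : 1 ≤ n)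
    (v : Fin (n + 1) → EuclideanSpace ℝ (Fin n))
    (hv : AffineIndependent ℝ v)
    (p : EuclideanSpace ℝ (Fin n))
    (hp : p ∈ convexHull ℝ (Set.range v))
    (r : ℝ)
    (heq : ∀ k, Metric.infDist p
        (affineSpan ℝ (v '' {l | l ≠ k}) : Set (EuclideanSpace ℝ (Fin n))) = r) :
    Metric.infDist p (⋃ k, convexHull ℝ (v '' {l | l ≠ k})) = r ∧
      ∀ q ∈ convexHull ℝ (Set.range v), q ≠ p →
        Metric.infDist q (⋃ k, convexHull ℝ (v '' {l | l ≠ k})) < r := by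
  have : Nontrivial (Fin (n + 1)) := Fin.nontrivial_iff_two_le.2 (by omega)
  obtain ⟨b, rfl⟩ : ∃ b : AffineBasis (Fin (n + 1)) ℝ (EuclideanSpace ℝ (Fin n)), ⇑b = v :=
    ⟨⟨v, hv, hv.affineSpan_eq_top_iff_card_eq_finrank_add_one.2 (by simp)⟩, rfl⟩
  have hcoord {x} (hx : x ∈ convexHull ℝ (range b)) : ∀ i, 0 ≤ b.coord i x := by
    rwa [b.convexHull_eq_nonneg_coord] at hx
  have hpk (k) : b.coord k p * infDist (b k) (affineSpan ℝ (b '' {l | l ≠ k})) = r := by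
    rw [← heq k, b.infDist_affineSpan_image_ne k p, abs_of_nonneg (hcoord hp k)]
  refine ⟨le_antisymm ((b.infDist_skeleton_le (hcoord hp) 0).trans_eq (hpk 0))
    (b.le_infDist_skeleton fun k => (heq k).ge), fun q hq hqp => ?_⟩
  obtain ⟨k, hk⟩ := b.exists_coord_lt_of_ne hqp
  calc infDist q b.skeleton ≤ _ := b.infDist_skeleton_le (hcoord hq) k
    _ < _ := mul_lt_mul_of_pos_right hk (b.infDist_affineSpan_image_ne_pos k)
    _ = r := hpk k

/-- The incenter is the unique maximizer of the distance to the `(n-1)`-skeleton: the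
equidistant point `p` is at distance `r` from the union of the facets, and every other
point of the simplex is strictly closer to the skeleton. -/
theorem stmt_17 (n : ℕ) (hn : 1 ≤ n)
    (v : Fin (n + 1) → EuclideanSpace ℝ (Fin n))
    (hv : AffineIndependent ℝ v)
    (p : EuclideanSpace ℝ (Fin n))
    (hp : p ∈ convexHull ℝ (Set.range v))
    (r : ℝ) (hr : 0 ≤ r)
    (heq : ∀ k, Metric.infDist p
        (affineSpan ℝ (v '' {l | l ≠ k}) : Set (EuclideanSpace ℝ (Fin n))) = r) :
    Metric.infDist p (⋃ k, convexHull ℝ (v '' {l | l ≠ k})) = r ∧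
      ∀ q ∈ convexHull ℝ (Set.range v), q ≠ p →
        Metric.infDist q (⋃ k, convexHull ℝ (v '' {l | l ≠ k})) < r :=
  stmt_17_general n hn v hv p hp r heq
end

section
/- Let n ≥ 1 and let v : Fin (n+1) → EuclideanSpace ℝ (Fin n) be unit vectors (‖v k‖ = 1 for all k) with ∑_k v_k = 0 and ⟪v i, v j⟫ = −1/n for all i ≠ j. Then for every index k, the distance from the origin to the k-th facet hyperplane equals 1/n: Metric.infDist 0 (affineSpan ℝ {v j : j ≠ k}) = 1/n. -/
/-!
The facet opposite `v k` lies in the hyperplane `⟪v k, x⟫ = -1/n`, since this affine condition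
holds at each of its vertices. The distance from the origin to that hyperplane is `1/n` by
Cauchy–Schwarz, and it is attained at `-(1/n) • v k`, which is the centroid of the facet because
the vertices sum to zero.
-/

open Finset

theorem AffineMap.apply_eq_of_mem_affineSpan {k V₁ P₁ V₂ P₂ : Type*} [Ring k]
    [AddCommGroup V₁] [Module k V₁] [AddTorsor V₁ P₁] [AddCommGroup V₂] [Module k V₂]
    [AddTorsor V₂ P₂] (f : P₁ →ᵃ[k] P₂) {s : Set P₁} {c : P₂} (hs : ∀ x ∈ s, f x = c)
    {x : P₁} (hx : x ∈ affineSpan k s) : f x = c := by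
  have hfx : f x ∈ affineSpan k (f '' s) := by
    rw [← AffineSubspace.map_span]
    exact ⟨x, hx, rfl⟩
  have himage : f '' s ⊆ {c} := by
    rintro _ ⟨y, hy, rfl⟩
    exact hs y hy
  simpa [AffineSubspace.coe_affineSpan_singleton] using affineSpan_mono k himage hfx

theorem neg_inv_smul_mem_affineSpan_of_sum_eq_zero {k V : Type*} [DivisionRing k]
    [AddCommGroup V] [Module k V] {n : ℕ} (hn : (n : k) ≠ 0) {v : Fin (n + 1) → V}
    (hv : ∑ i, v i = 0) (i : Fin (n + 1)) :
    -((n : k)⁻¹ • v i) ∈ affineSpan k (v '' {j | j ≠ i}) := by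
  have hw : ∑ _j ∈ ({i}ᶜ : Finset _), (n : k)⁻¹ = 1 := by
    simp [card_compl, hn]
  have hrest : ∑ j ∈ ({i}ᶜ : Finset _), v j = -v i := by
    rw [Fintype.sum_eq_add_sum_compl i] at hv
    exact eq_neg_of_add_eq_zero_right hv
  have hmem := affineCombination_mem_affineSpan_image hw (s' := {j | j ≠ i})
    (fun j hj hj' => (hj' (by simpa using hj)).elim) v
  rwa [affineCombination_eq_linear_combination _ _ _ hw, ← smul_sum, hrest, smul_neg] at hmem

theorem infDist_zero_eq_abs_of_forall_inner_eq {E : Type*} [NormedAddCommGroup E]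
    [InnerProductSpace ℝ E] {u : E} (hu : ‖u‖ = 1) {s : Set E} {c : ℝ}
    (hs : ∀ x ∈ s, inner ℝ u x = c) (hc : c • u ∈ s) : Metric.infDist 0 s = |c| := by
  apply le_antisymm
  · simpa [norm_smul, hu] using Metric.infDist_le_dist_of_mem (x := 0) hc
  · refine (Metric.le_infDist ⟨_, hc⟩).2 fun y hy => ?_
    calc |c| = |inner ℝ u y| := by rw [hs y hy]
      _ ≤ ‖u‖ * ‖y‖ := abs_real_inner_le_norm u y
      _ = dist 0 y := by rw [hu, one_mul, dist_zero_left]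

/-- For the regular simplex inscribed in the unit sphere (unit vertices summing to `0`
with pairwise inner products `-1/n`), the distance from the origin to every facet
hyperplane equals `1/n`. -/
theorem stmt_18 (n : ℕ) (hn : 1 ≤ n)
    (v : Fin (n + 1) → EuclideanSpace ℝ (Fin n))
    (hnorm : ∀ k, ‖v k‖ = 1)
    (hsum : ∑ k, v k = 0)
    (hinner : ∀ i j : Fin (n + 1), i ≠ j → (inner ℝ (v i) (v j) : ℝ) = -1 / n) :
    ∀ k, Metric.infDist 0
        (affineSpan ℝ (v '' {j | j ≠ k}) : Set (EuclideanSpace ℝ (Fin n))) = 1 / n := by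
  intro k
  have hn0 : (n : ℝ) ≠ 0 := Nat.cast_ne_zero.2 (by omega)
  have hlevel : ∀ x ∈ affineSpan ℝ (v '' {j | j ≠ k}), inner ℝ (v k) x = -1 / n :=
    fun x => (innerₛₗ ℝ (v k)).toAffineMap.apply_eq_of_mem_affineSpan <| by
      rintro _ ⟨j, hj, rfl⟩
      exact hinner k j (Ne.symm hj)
  have hfoot : (-1 / n : ℝ) • v k ∈ affineSpan ℝ (v '' {j | j ≠ k}) := by
    simpa [neg_div, neg_smul] using neg_inv_smul_mem_affineSpan_of_sum_eq_zero hn0 hsum k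
  rw [infDist_zero_eq_abs_of_forall_inner_eq (hnorm k) hlevel hfoot, abs_div, abs_neg, abs_one,
    Nat.abs_cast]
end

section
/- For every n ≥ 1 there exists a family v : Fin (n+1) → EuclideanSpace ℝ (Fin n) of unit vectors (‖v k‖ = 1 for all k) such that ⟪v i, v j⟫ = −1/n for all i ≠ j; moreover any such family satisfies ∑_k v_k = 0 and is affinely independent. -/
/-!
The hypotheses say exactly that the Gram matrix of `v` is `(1 + 1/n) I - (1/n) J`. Pairing a
relation `∑ wᵢ vᵢ = 0` with `∑ wᵢ = 0` against `vⱼ` then gives `(1 + 1/n) wⱼ = 0`, and pairing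
`∑ vᵢ` with each `vⱼ` gives `1 - n/n = 0`. For existence, the standard basis vectors of `ℝⁿ⁺¹`
minus their centroid have Gram matrix `I - J/(n+1)`; rescaled by `√((n+1)/n)` they have the
required Gram matrix, and they lie in the hyperplane `(1, …, 1)ᗮ`, which is isometric to `ℝⁿ`.
-/

open Finset Module RealInnerProductSpace

section GramMatrix

variable {ι F : Type*} [NormedAddCommGroup F] [InnerProductSpace ℝ F] {v : ι → F}

lemma inner_eq_ite_one_iff [DecidableEq ι] {d : ℝ} :
    (∀ i j, ⟪v i, v j⟫ = if i = j then 1 else d) ↔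
      (∀ k, ‖v k‖ = 1) ∧ ∀ i j, i ≠ j → ⟪v i, v j⟫ = d := by
  refine ⟨fun hv => ⟨fun k => ?_, fun i j hij => by rw [hv, if_neg hij]⟩, ?_⟩
  · have hk := hv k k
    rw [if_pos rfl, real_inner_self_eq_norm_sq] at hk
    exact (pow_eq_one_iff_of_nonneg (norm_nonneg _) two_ne_zero).1 hk
  · rintro ⟨hnorm, hinner⟩ i j
    split_ifs with h
    · rw [h, real_inner_self_eq_norm_sq, hnorm, one_pow]
    · exact hinner i j h

variable [Fintype ι] [DecidableEq ι] {c d : ℝ}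

lemma inner_sum_smul_left_of_inner_eq_ite
    (hv : ∀ i j, ⟪v i, v j⟫ = if i = j then c else d) (w : ι → ℝ) (j : ι) :
    ⟪∑ i, w i • v i, v j⟫ = (c - d) * w j + d * ∑ i, w i := by
  have hterm : ∀ i, w i * ⟪v i, v j⟫ = (if i = j then (c - d) * w j else 0) + d * w i := by
    intro i
    rw [hv]
    split_ifs with h
    · subst h; ring
    · ring
  simp only [sum_inner, real_inner_smul_left, hterm, sum_add_distrib, sum_ite_eq', mem_univ,
    if_true, mul_sum]

lemma affineIndependent_of_inner_eq_ite
    (hv : ∀ i j, ⟪v i, v j⟫ = if i = j then c else d) (hcd : c ≠ d) :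
    AffineIndependent ℝ v := by
  rw [affineIndependent_iff_of_fintype]
  intro w hw hvw j
  rw [univ.weightedVSub_eq_linear_combination hw] at hvw
  have h := inner_sum_smul_left_of_inner_eq_ite hv w j
  rw [hvw, inner_zero_left, hw, mul_zero, add_zero, eq_comm] at h
  exact (mul_eq_zero.1 h).resolve_left (sub_ne_zero.2 hcd)

lemma sum_eq_zero_of_inner_eq_ite
    (hv : ∀ i j, ⟪v i, v j⟫ = if i = j then c else d)
    (hcd : c + (Fintype.card ι - 1) * d = 0) :
    ∑ i, v i = 0 := by
  have h : ∀ j, ⟪∑ i, v i, v j⟫ = 0 := by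
    intro j
    have := inner_sum_smul_left_of_inner_eq_ite hv 1 j
    simp only [Pi.one_apply, one_smul, sum_const, card_univ, nsmul_eq_mul, mul_one] at this
    rw [this, ← hcd]
    ring
  rw [← inner_self_eq_zero (𝕜 := ℝ), inner_sum]
  exact sum_eq_zero fun j _ => h j

end GramMatrix

lemma Submodule.exists_euclideanSpace_family_inner_eq {ι F : Type*} [NormedAddCommGroup F]
    [InnerProductSpace ℝ F] (K : Submodule ℝ F) [FiniteDimensional ℝ K] {m : ℕ}
    (hK : finrank ℝ K = m) {u : ι → F} (hu : ∀ i, u i ∈ K) :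
    ∃ v : ι → EuclideanSpace ℝ (Fin m), ∀ i j, ⟪v i, v j⟫ = ⟪u i, u j⟫ :=
  let b := (stdOrthonormalBasis ℝ K).reindex (finCongr hK)
  ⟨fun i => b.repr ⟨u i, hu i⟩, fun _ _ => b.repr.inner_map_map _ _⟩

namespace EuclideanSpace

variable {n : ℕ}

noncomputable def ones (n : ℕ) : EuclideanSpace ℝ (Fin n) := WithLp.toLp 2 fun _ => 1

noncomputable def centeredSingle (n : ℕ) (i : Fin (n + 1)) : EuclideanSpace ℝ (Fin (n + 1)) :=
  single i 1 - ((n : ℝ) + 1)⁻¹ • ones (n + 1)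

lemma inner_single_ones (i : Fin n) : ⟪single i (1 : ℝ), ones n⟫ = 1 := by
  simp [inner_single_left, ones]

lemma inner_ones_single (i : Fin n) : ⟪ones n, single i (1 : ℝ)⟫ = 1 := by
  rw [real_inner_comm, inner_single_ones]

lemma inner_ones_ones : ⟪ones n, ones n⟫ = n := by
  simp only [ones, PiLp.inner_apply]
  simp

lemma ones_succ_ne_zero : ones (n + 1) ≠ 0 := by
  intro h
  have h' := inner_ones_ones (n := n + 1)
  rw [h, inner_zero_left] at h'
  norm_cast at h'

lemma inner_centeredSingle (i j : Fin (n + 1)) :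
    ⟪centeredSingle n i, centeredSingle n j⟫ = (if i = j then 1 else 0) - ((n : ℝ) + 1)⁻¹ := by
  have hn : (n : ℝ) + 1 ≠ 0 := by positivity
  simp only [centeredSingle, inner_sub_left, inner_sub_right, real_inner_smul_left,
    real_inner_smul_right, inner_single_ones, inner_ones_single, inner_ones_ones,
    orthonormal_iff_ite.1 orthonormal_single i j]
  push_cast
  field_simp
  ring

lemma inner_ones_centeredSingle (i : Fin (n + 1)) : ⟪ones (n + 1), centeredSingle n i⟫ = 0 := by
  have hn : (n : ℝ) + 1 ≠ 0 := by positivity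
  simp only [centeredSingle, inner_sub_right, real_inner_smul_right, inner_ones_single,
    inner_ones_ones]
  push_cast
  field_simp
  ring

theorem exists_inner_eq_ite_one_neg_inv (hn : n ≠ 0) :
    ∃ v : Fin (n + 1) → EuclideanSpace ℝ (Fin n),
      ∀ i j, ⟪v i, v j⟫ = if i = j then 1 else -1 / (n : ℝ) := by
  have : Fact (finrank ℝ (EuclideanSpace ℝ (Fin (n + 1))) = n + 1) :=
    ⟨finrank_euclideanSpace_fin⟩
  set r := √(((n : ℝ) + 1) / n)
  have hmem (i : Fin (n + 1)) : r • centeredSingle n i ∈ (ℝ ∙ ones (n + 1))ᗮ :=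
    Submodule.smul_mem _ r <| Submodule.mem_orthogonal_singleton_iff_inner_right.2 <|
      inner_ones_centeredSingle i
  obtain ⟨v, hv⟩ := Submodule.exists_euclideanSpace_family_inner_eq _
    (Submodule.finrank_orthogonal_span_singleton (n := n) ones_succ_ne_zero) hmem
  refine ⟨v, fun i j => ?_⟩
  have hn' : (n : ℝ) ≠ 0 := Nat.cast_ne_zero.2 hn
  rw [hv, real_inner_smul_left, real_inner_smul_right, ← mul_assoc,
    Real.mul_self_sqrt (by positivity), inner_centeredSingle]
  split_ifs <;> field_simp <;> ring

end EuclideanSpace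

/-- Existence of the regular simplex inscribed in the unit sphere: there is a family of
`n+1` unit vectors with pairwise inner products `-1/n`; moreover any such family sums to
`0` and is affinely independent. -/
theorem stmt_19 (n : ℕ) (hn : 1 ≤ n) :
    (∃ v : Fin (n + 1) → EuclideanSpace ℝ (Fin n),
        (∀ k, ‖v k‖ = 1) ∧
          ∀ i j : Fin (n + 1), i ≠ j → (inner ℝ (v i) (v j) : ℝ) = -1 / n) ∧
      ∀ v : Fin (n + 1) → EuclideanSpace ℝ (Fin n),
        (∀ k, ‖v k‖ = 1) →
          (∀ i j : Fin (n + 1), i ≠ j → (inner ℝ (v i) (v j) : ℝ) = -1 / n) →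
            ∑ k, v k = 0 ∧ AffineIndependent ℝ v := by
  have hn_pos : (0 : ℝ) < n := Nat.cast_pos.2 hn
  refine ⟨?_, fun v hnorm hinner => ?_⟩
  · obtain ⟨v, hv⟩ := EuclideanSpace.exists_inner_eq_ite_one_neg_inv (Nat.one_le_iff_ne_zero.1 hn)
    exact ⟨v, inner_eq_ite_one_iff.1 hv⟩
  have hv := inner_eq_ite_one_iff.2 ⟨hnorm, hinner⟩
  refine ⟨sum_eq_zero_of_inner_eq_ite hv ?_, affineIndependent_of_inner_eq_ite hv ?_⟩
  · rw [Fintype.card_fin]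
    push_cast
    field_simp
    ring
  · exact ((div_neg_of_neg_of_pos neg_one_lt_zero hn_pos).trans one_pos).ne'
end
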